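/- arXiv:1001.4012 — 8 statements merged into one kernel-verified Lean document; each statement's English description precedes it below -/
import Mathlib

section
/- Let X be a complete separable metric space, let μ and ν be Borel probability measures on X, and let c : X × X → [0,∞] be lower semicontinuous. Then the Kantorovich problem admits a minimizer: there exists a transport plan γ₀ ∈ Π(μ,ν) such that ∫ c dγ₀ ≤ ∫ c dγ for every γ ∈ Π(μ,ν). -/
/-!
The transport plans form a closed and tight, hence by Prokhorov's theorem compact, subset of the
probability measures on `X × X` with the weak topology. A lower semicontinuous cost `c ≥ 0` is the
increasing limit of the bounded Lipschitz functions `x ↦ ⨅ y, min (c y) n + n * d(x, y)`, so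
`γ ↦ ∫⁻ c ∂γ` is a supremum of weakly continuous functions, hence lower semicontinuous, and it
attains its minimum on the compact set of transport plans.
-/

open MeasureTheory Set TopologicalSpace
open scoped ENNReal NNReal BoundedContinuousFunction

section InfConvolution

variable {Y : Type*} [PseudoEMetricSpace Y]

lemma continuous_iInf_add_mul_edist (h : Y → ℝ≥0∞) {C : ℝ≥0∞} (hC : C ≠ ∞) :
    Continuous fun x ↦ ⨅ y, h y + C * edist x y := by
  refine continuous_of_le_add_edist C hC fun x x' ↦ ?_
  calc ⨅ y, h y + C * edist x y ≤ ⨅ y, (h y + C * edist x' y) + C * edist x x' :=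
        iInf_mono fun y ↦ by
          grw [edist_triangle x x' y]
          exact le_of_eq (by ring)
    _ = (⨅ y, h y + C * edist x' y) + C * edist x x' := ENNReal.iInf_add.symm

lemma LowerSemicontinuous.iSup_iInf_min_add_mul_edist {c : Y → ℝ≥0∞}
    (hc : LowerSemicontinuous c) (x : Y) :
    ⨆ n : ℕ, ⨅ y, min (c y) n + n * edist x y = c x := by
  refine le_antisymm (iSup_le fun n ↦ (iInf_le _ x).trans (by simp)) ?_
  refine le_of_forall_lt_imp_le_of_dense fun a ha ↦ ?_
  obtain ⟨δ, hδ, hball⟩ := EMetric.isOpen_iff.1 (hc.isOpen_preimage a) x ha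
  obtain ⟨n₁, hn₁⟩ := ENNReal.exists_nat_gt ha.ne_top
  obtain ⟨n₂, hn₂⟩ := ENNReal.exists_nat_gt (ENNReal.div_ne_top ha.ne_top hδ.ne')
  refine le_iSup_of_le (max n₁ n₂) (le_iInf fun y ↦ ?_)
  by_cases hy : edist y x < δ
  · refine le_add_right (le_min (hball hy).le (hn₁.le.trans ?_))
    exact_mod_cast le_max_left n₁ n₂
  · refine le_add_left ?_
    rw [edist_comm] at hy
    calc a ≤ n₂ * δ := ((ENNReal.div_lt_iff (.inl hδ.ne') (.inr ha.ne_top)).1 hn₂).le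
      _ ≤ (max n₁ n₂ : ℕ) * edist x y := by
          gcongr
          · exact_mod_cast le_max_right n₁ n₂
          · exact not_lt.1 hy

lemma LowerSemicontinuous.exists_boundedContinuous_iSup_eq {c : Y → ℝ≥0∞}
    (hc : LowerSemicontinuous c) :
    ∃ f : ℕ → Y →ᵇ ℝ≥0, Monotone (fun n x ↦ (f n x : ℝ≥0∞)) ∧
      ∀ x, ⨆ n, (f n x : ℝ≥0∞) = c x := by
  set g : ℕ → Y → ℝ≥0∞ := fun n x ↦ ⨅ y, min (c y) n + n * edist x y
  have hg_le (n : ℕ) (x : Y) : g n x ≤ n := (iInf_le _ x).trans (by simp)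
  have hg_ne_top (n : ℕ) (x : Y) : g n x ≠ ∞ := ((hg_le n x).trans_lt (by simp)).ne
  let f (n : ℕ) : Y →ᵇ ℝ≥0 :=
    .mkOfBound ⟨fun x ↦ (g n x).toNNReal, ENNReal.continuousOn_toNNReal.comp_continuous
      (continuous_iInf_add_mul_edist _ (by simp)) (hg_ne_top n)⟩ n fun x y ↦ by
        have h_toReal_le (z : Y) : (g n z).toReal ≤ n :=
          ENNReal.toReal_le_of_le_ofReal n.cast_nonneg (by simpa using hg_le n z)
        simp only [NNReal.dist_eq, ContinuousMap.coe_mk, ENNReal.coe_toNNReal_eq_toReal]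
        exact abs_sub_le_iff.2 ⟨by linarith [h_toReal_le x, (g n y).toReal_nonneg],
          by linarith [h_toReal_le y, (g n x).toReal_nonneg]⟩
  have hfg (n : ℕ) (x : Y) : (f n x : ℝ≥0∞) = g n x := ENNReal.coe_toNNReal (hg_ne_top n x)
  refine ⟨f, fun m n hmn x ↦ ?_, fun x ↦ ?_⟩
  · simp only [hfg, g]
    gcongr
  · simpa only [hfg] using hc.iSup_iInf_min_add_mul_edist x

end InfConvolution

namespace MeasureTheory

lemma ProbabilityMeasure.lowerSemicontinuous_lintegral {Y : Type*} [PseudoEMetricSpace Y]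
    [MeasurableSpace Y] [OpensMeasurableSpace Y] {c : Y → ℝ≥0∞} (hc : LowerSemicontinuous c) :
    LowerSemicontinuous fun μ : ProbabilityMeasure Y ↦ ∫⁻ y, c y ∂μ := by
  obtain ⟨f, hf_mono, hf_sup⟩ := hc.exists_boundedContinuous_iSup_eq
  have h_eq (μ : ProbabilityMeasure Y) : ∫⁻ y, c y ∂μ = ⨆ n, ∫⁻ y, f n y ∂μ := by
    simp_rw [← hf_sup]
    exact lintegral_iSup (fun n ↦ (f n).continuous.measurable.coe_nnreal_ennreal) hf_mono
  simp_rw [h_eq]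
  exact lowerSemicontinuous_iSup fun n ↦
    (ProbabilityMeasure.continuous_lintegral_boundedContinuousFunction (f n)).lowerSemicontinuous

lemma ProbabilityMeasure.isClosed_setOf_map_eq {Y Z : Type*} [TopologicalSpace Y]
    [MeasurableSpace Y] [OpensMeasurableSpace Y] [TopologicalSpace Z]
    [PseudoMetrizableSpace Z] [SeparableSpace Z] [MeasurableSpace Z] [BorelSpace Z]
    {f : Y → Z} (hf : Continuous f) (ρ : Measure Z) [IsProbabilityMeasure ρ] :
    IsClosed {γ : ProbabilityMeasure Y | (γ : Measure Y).map f = ρ} := by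
  let ρ' : ProbabilityMeasure Z := ⟨ρ, ‹_›⟩
  have h_eq : {γ : ProbabilityMeasure Y | (γ : Measure Y).map f = ρ} =
      {γ | γ.map hf.measurable.aemeasurable = ρ'} := by
    ext γ
    simp only [mem_ofPred_eq, ← ProbabilityMeasure.toMeasure_injective.eq_iff,
      ProbabilityMeasure.toMeasure_map]
    rfl
  rw [h_eq]
  exact isClosed_eq (ProbabilityMeasure.continuous_map hf) continuous_const

def transportPlans {X : Type*} [MeasurableSpace X] (μ ν : Measure X) :
    Set (ProbabilityMeasure (X × X)) :=
  {γ | (γ : Measure (X × X)).fst = μ ∧ (γ : Measure (X × X)).snd = ν}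

lemma transportPlans_nonempty {X : Type*} [MeasurableSpace X] (μ ν : Measure X)
    [IsProbabilityMeasure μ] [IsProbabilityMeasure ν] : (transportPlans μ ν).Nonempty :=
  ⟨⟨μ.prod ν, inferInstance⟩, Measure.fst_prod, Measure.snd_prod⟩

section TransportPlans

variable {X : Type*} [TopologicalSpace X] [PolishSpace X] [MeasurableSpace X] [BorelSpace X]
  (μ ν : Measure X) [IsProbabilityMeasure μ] [IsProbabilityMeasure ν]

lemma isTightMeasureSet_transportPlans :
    IsTightMeasureSet {(γ : Measure (X × X)) | γ ∈ transportPlans μ ν} := by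
  refine .prodMk (isTightMeasureSet_singleton (μ := μ).subset ?_)
    (isTightMeasureSet_singleton (μ := ν).subset ?_)
  · rintro _ ⟨_, ⟨γ, hγ, rfl⟩, rfl⟩
    exact hγ.1
  · rintro _ ⟨_, ⟨γ, hγ, rfl⟩, rfl⟩
    exact hγ.2

lemma isClosed_transportPlans : IsClosed (transportPlans μ ν) :=
  (ProbabilityMeasure.isClosed_setOf_map_eq continuous_fst μ).inter
    (ProbabilityMeasure.isClosed_setOf_map_eq continuous_snd ν)

lemma isCompact_transportPlans : IsCompact (transportPlans μ ν) := by
  simpa [(isClosed_transportPlans μ ν).closure_eq] using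
    isCompact_closure_of_isTightMeasureSet (isTightMeasureSet_transportPlans μ ν)

end TransportPlans

end MeasureTheory

theorem stmt_0 {X : Type*} [MetricSpace X] [CompleteSpace X]
    [TopologicalSpace.SeparableSpace X] [MeasurableSpace X] [BorelSpace X]
    (μ ν : Measure X) [IsProbabilityMeasure μ] [IsProbabilityMeasure ν]
    (c : X × X → ENNReal) (hc : LowerSemicontinuous c) :
    ∃ γ₀ : Measure (X × X), IsProbabilityMeasure γ₀ ∧
      γ₀.map Prod.fst = μ ∧ γ₀.map Prod.snd = ν ∧
      ∀ γ : Measure (X × X), IsProbabilityMeasure γ →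
        γ.map Prod.fst = μ → γ.map Prod.snd = ν →
        ∫⁻ p, c p ∂γ₀ ≤ ∫⁻ p, c p ∂γ := by
  obtain ⟨γ₀, ⟨hγ₀_fst, hγ₀_snd⟩, hγ₀_min⟩ := LowerSemicontinuousOn.exists_isMinOn
    (transportPlans_nonempty μ ν) (isCompact_transportPlans μ ν)
    ((ProbabilityMeasure.lowerSemicontinuous_lintegral hc).lowerSemicontinuousOn _)
  exact ⟨γ₀, inferInstance, hγ₀_fst, hγ₀_snd, fun γ _ hγ_fst hγ_snd ↦
    hγ₀_min (a := ⟨γ, ‹_›⟩) ⟨hγ_fst, hγ_snd⟩⟩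
end

section
/- Let (X,d) be a geodesic and non-branching metric space. Let x, y, x', y' ∈ X with x ≠ y and x ≠ x', assume there are a constant-speed minimal curve σ : [0,1] → X with σ(0) = x, σ(1) = y and a parameter r ∈ (0,1] with σ(r) = x' (x' lies on a minimal curve from x to y), and assume d(x,y) + d(x',y') ≤ d(x,y') + d(x',y). Then all four points lie on one minimal curve: there exist a constant-speed minimal curve τ : [0,1] → X and reals s, t, t' with 0 < s ≤ t ≤ 1 and s ≤ t' ≤ 1 such that τ(0) = x, τ(s) = x', τ(t) = y and τ(t') = y'. -/
/-!
Since `x'` lies on a minimal curve from `x` to `y`, the inequality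
`d(x,y) + d(x',y') ≤ d(x,y') + d(x',y)` forces `d(x,y') = d(x,x') + d(x',y')`. Following `σ`
up to `x'` and then a minimal curve from `x'` to `y'` is therefore a minimal curve `τ` from `x`
to `y'`. After rescaling, `σ` and `τ` agree up to `x'`, a nondegenerate initial interval, so by
non-branching the shorter of the two is an initial piece of the longer one, which then passes
through all four points.
-/

/-- A constant-speed minimal curve parameterized on `[0,1]`. -/
def IsMinCurve {X : Type*} [MetricSpace X] (σ : ℝ → X) : Prop :=
  ∀ s s' : ℝ, 0 ≤ s → s ≤ s' → s' ≤ 1 →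
    dist (σ s) (σ s') = (s' - s) * dist (σ 0) (σ 1)

/-- A metric space is geodesic if any two points are joined by a
constant-speed minimal curve. -/
def IsGeodesicSpace (X : Type*) [MetricSpace X] : Prop :=
  ∀ x y : X, ∃ σ : ℝ → X, IsMinCurve σ ∧ σ 0 = x ∧ σ 1 = y

/-- A metric space is non-branching if any two constant-speed minimal curves
parameterized on `[0,1]` which coincide on a nondegenerate subinterval of
`[0,1]` coincide on all of `[0,1]`. -/
def IsNonBranching (X : Type*) [MetricSpace X] : Prop :=
  ∀ σ τ : ℝ → X, IsMinCurve σ → IsMinCurve τ →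
    ∀ a b : ℝ, 0 ≤ a → a < b → b ≤ 1 → (∀ s ∈ Set.Icc a b, σ s = τ s) →
      ∀ s ∈ Set.Icc (0 : ℝ) 1, σ s = τ s

open Set

noncomputable def joinCurves {Y : Type*} (s : ℝ) (α β : ℝ → Y) : ℝ → Y :=
  fun u => if u ≤ s then α (u / s) else β ((u - s) / (1 - s))

section joinCurves

variable {Y : Type*} {s : ℝ} {α β : ℝ → Y}

lemma joinCurves_of_le {u : ℝ} (hu : u ≤ s) : joinCurves s α β u = α (u / s) :=
  if_pos hu

lemma joinCurves_of_ge (hs : s ≠ 0) (hjoin : α 1 = β 0) {u : ℝ} (hu : s ≤ u) :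
    joinCurves s α β u = β ((u - s) / (1 - s)) := by
  rcases hu.eq_or_lt with rfl | hlt
  · rw [joinCurves_of_le le_rfl, div_self hs, sub_self, zero_div, hjoin]
  · exact if_neg hlt.not_ge

end joinCurves

section MinCurves

variable {X : Type*} [MetricSpace X]

namespace IsMinCurve

variable {σ : ℝ → X}

lemma dist_add_dist (hσ : IsMinCurve σ) {r : ℝ} (hr : r ∈ Icc (0 : ℝ) 1) :
    dist (σ 0) (σ r) + dist (σ r) (σ 1) = dist (σ 0) (σ 1) := by
  rw [hσ 0 r le_rfl hr.1 hr.2, hσ r 1 hr.1 hr.2 le_rfl]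
  ring

lemma comp_mul (hσ : IsMinCurve σ) {c : ℝ} (hc : c ∈ Icc (0 : ℝ) 1) :
    IsMinCurve (fun v => σ (v * c)) := by
  obtain ⟨hc0, hc1⟩ := hc
  intro u v hu huv hv
  rw [hσ (u * c) (v * c) (by positivity) (by nlinarith) (by nlinarith),
    hσ (0 * c) (1 * c) (by simp) (by simpa using hc0) (by simpa using hc1)]
  ring

end IsMinCurve

lemma isMinCurve_of_pieces {τ : ℝ → X} {s L : ℝ} (hL : dist (τ 0) (τ 1) = L)
    (hleft : ∀ u v, 0 ≤ u → u ≤ v → v ≤ s → dist (τ u) (τ v) = (v - u) * L)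
    (hright : ∀ u v, s ≤ u → u ≤ v → v ≤ 1 → dist (τ u) (τ v) = (v - u) * L) :
    IsMinCurve τ := by
  intro u v hu huv hv
  rw [hL]
  rcases le_total v s with hvs | hsv
  · exact hleft u v hu huv hvs
  rcases le_total s u with hsu | hus
  · exact hright u v hsu huv hv
  -- `u ≤ s ≤ v`: the triangle inequality through `τ s` bounds `dist (τ u) (τ v)` from above,
  -- the one from `τ 0` to `τ 1` through `τ u` and `τ v` from below.
  have := hleft u s hu hus le_rfl
  have := hright s v le_rfl hsv hv
  have := hleft 0 u le_rfl hu hus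
  have := hright v 1 hsv hv le_rfl
  have := dist_triangle (τ u) (τ s) (τ v)
  have := dist_triangle (τ 0) (τ u) (τ v)
  have := dist_triangle (τ 0) (τ v) (τ 1)
  apply le_antisymm <;> linarith

lemma IsMinCurve.joinCurves {s : ℝ} {α β : ℝ → X} (hα : IsMinCurve α) (hβ : IsMinCurve β)
    (hs : s ∈ Ioo (0 : ℝ) 1) (hjoin : α 1 = β 0)
    (hαs : dist (α 0) (α 1) = s * dist (α 0) (β 1))
    (hβs : dist (β 0) (β 1) = (1 - s) * dist (α 0) (β 1)) :
    IsMinCurve (joinCurves s α β) := by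
  obtain ⟨hs0, hs1⟩ := hs
  have h1s : 0 < 1 - s := sub_pos.2 hs1
  refine isMinCurve_of_pieces (s := s) (L := dist (α 0) (β 1)) ?_ ?_ ?_
  · rw [joinCurves_of_le hs0.le, joinCurves_of_ge hs0.ne' hjoin hs1.le, zero_div, div_self h1s.ne']
  · intro u v hu huv hvs
    rw [joinCurves_of_le (huv.trans hvs), joinCurves_of_le hvs,
      hα _ _ (div_nonneg hu hs0.le) (div_le_div_of_nonneg_right huv hs0.le)
        ((div_le_one hs0).2 hvs), hαs]
    field_simp
  · intro u v hsu huv hv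
    rw [joinCurves_of_ge hs0.ne' hjoin hsu, joinCurves_of_ge hs0.ne' hjoin (hsu.trans huv),
      hβ _ _ (div_nonneg (sub_nonneg.2 hsu) h1s.le)
        (div_le_div_of_nonneg_right (by linarith) h1s.le) ((div_le_one h1s).2 (by linarith)), hβs]
    field_simp
    ring

lemma IsGeodesicSpace.exists_minCurve_extend (hgeo : IsGeodesicSpace X) {σ : ℝ → X}
    (hσ : IsMinCurve σ) {r : ℝ} (hr : r ∈ Ioc (0 : ℝ) 1) (hne : σ 0 ≠ σ r) {y' : X}
    (hy' : dist (σ 0) y' = dist (σ 0) (σ r) + dist (σ r) y') :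
    ∃ τ : ℝ → X, ∃ s ∈ Ioc (0 : ℝ) 1, IsMinCurve τ ∧ τ 1 = y' ∧
      ∀ v ∈ Icc 0 s, τ v = σ (v * (r / s)) := by
  have hσr : IsMinCurve (fun v => σ (v * r)) := hσ.comp_mul ⟨hr.1.le, hr.2⟩
  by_cases hry' : σ r = y'
  · exact ⟨_, 1, ⟨one_pos, le_rfl⟩, hσr, by simpa using hry', by simp⟩
  obtain ⟨γ, hγ, hγ0, hγ1⟩ := hgeo (σ r) y'
  have hpos : 0 < dist (σ 0) (σ r) := dist_pos.2 hne
  have hpos' : 0 < dist (σ r) y' := dist_pos.2 hry'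
  set s := dist (σ 0) (σ r) / dist (σ 0) y'
  have hs : s ∈ Ioo (0 : ℝ) 1 :=
    ⟨div_pos hpos (by linarith), (div_lt_one (by linarith)).2 (by linarith)⟩
  have hsL : s * dist (σ 0) y' = dist (σ 0) (σ r) := div_mul_cancel₀ _ (by linarith)
  refine ⟨joinCurves s (fun v => σ (v * r)) γ, s, ⟨hs.1, hs.2.le⟩, ?_, ?_, ?_⟩
  · refine hσr.joinCurves hγ hs (by simp [hγ0]) ?_ ?_ <;> simp only [zero_mul, one_mul, hγ0, hγ1]
    · exact hsL.symm
    · linarith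
  · rw [joinCurves_of_ge hs.1.ne' (by simp [hγ0]) hs.2.le, div_self (sub_pos.2 hs.2).ne', hγ1]
  · intro v hv
    rw [joinCurves_of_le hv.2, div_mul_eq_mul_div, mul_div_assoc]

namespace IsNonBranching

variable {α β : ℝ → X} {a c : ℝ}

lemma apply_one_eq (hnb : IsNonBranching X) (hα : IsMinCurve α) (hβ : IsMinCurve β)
    (ha : a ∈ Ioc (0 : ℝ) 1) (hc : c ∈ Icc (0 : ℝ) 1) (h : ∀ v ∈ Icc 0 a, α v = β (v * c)) :
    α 1 = β c := by
  simpa using hnb α _ hα (hβ.comp_mul hc) 0 a le_rfl ha.1 ha.2 h 1 ⟨zero_le_one, le_rfl⟩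

lemma apply_inv_eq (hnb : IsNonBranching X) (hα : IsMinCurve α) (hβ : IsMinCurve β)
    (ha : a ∈ Ioc (0 : ℝ) 1) (hc : 1 ≤ c) (h : ∀ v ∈ Icc 0 a, α v = β (v * c)) :
    β 1 = α c⁻¹ := by
  have hc0 : 0 < c := one_pos.trans_le hc
  refine hnb.apply_one_eq hβ hα ha ⟨inv_nonneg.2 hc0.le, inv_le_one_of_one_le₀ hc⟩ fun v hv => ?_
  have hvc : v * c⁻¹ ≤ v := mul_le_of_le_one_right hv.1 (inv_le_one_of_one_le₀ hc)
  rw [h _ ⟨mul_nonneg hv.1 (inv_nonneg.2 hc0.le), hvc.trans hv.2⟩, inv_mul_cancel_right₀ hc0.ne']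

end IsNonBranching

end MinCurves

theorem stmt_4_general {X : Type*} [MetricSpace X]
    (hgeo : IsGeodesicSpace X) (hnb : IsNonBranching X)
    (x y x' y' : X) (hxx' : x ≠ x')
    (σ : ℝ → X) (hσ : IsMinCurve σ) (hσ0 : σ 0 = x) (hσ1 : σ 1 = y)
    (r : ℝ) (hr : r ∈ Set.Ioc (0 : ℝ) 1) (hσr : σ r = x')
    (hmono : dist x y + dist x' y' ≤ dist x y' + dist x' y) :
    ∃ (τ : ℝ → X) (s t t' : ℝ), IsMinCurve τ ∧
      0 < s ∧ s ≤ t ∧ t ≤ 1 ∧ s ≤ t' ∧ t' ≤ 1 ∧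
      τ 0 = x ∧ τ s = x' ∧ τ t = y ∧ τ t' = y' := by
  subst hσ0 hσr hσ1
  have hy' : dist (σ 0) y' = dist (σ 0) (σ r) + dist (σ r) y' :=
    le_antisymm (dist_triangle _ _ _) (by linarith [hσ.dist_add_dist ⟨hr.1.le, hr.2⟩])
  obtain ⟨τ, s, ⟨hs0, hs1⟩, hτ, hτ1, hτσ⟩ := hgeo.exists_minCurve_extend hσ hr hxx' hy'
  have hτ0 : τ 0 = σ 0 := by rw [hτσ 0 ⟨le_rfl, hs0.le⟩, zero_mul]
  have hτs : τ s = σ r := by rw [hτσ s ⟨hs0.le, le_rfl⟩, mul_div_cancel₀ _ hs0.ne']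
  rcases le_total (r / s) 1 with hc | hc
  · refine ⟨σ, r, 1, r / s, hσ, hr.1, hr.2, le_rfl, le_div_self hr.1.le hs0 hs1, hc,
      rfl, rfl, rfl, ?_⟩
    rw [← hτ1, hnb.apply_one_eq hτ hσ ⟨hs0, hs1⟩ ⟨div_nonneg hr.1.le hs0.le, hc⟩ hτσ]
  · refine ⟨τ, s, (r / s)⁻¹, 1, hτ, hs0, ?_, inv_le_one_of_one_le₀ hc, hs1, le_rfl,
      hτ0, hτs, (hnb.apply_inv_eq hτ hσ ⟨hs0, hs1⟩ hc hτσ).symm, hτ1⟩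
    rw [inv_div]
    exact le_div_self hs0.le hr.1 hr.2

theorem stmt_4 {X : Type*} [MetricSpace X]
    (hgeo : IsGeodesicSpace X) (hnb : IsNonBranching X)
    (x y x' y' : X) (hxy : x ≠ y) (hxx' : x ≠ x')
    (σ : ℝ → X) (hσ : IsMinCurve σ) (hσ0 : σ 0 = x) (hσ1 : σ 1 = y)
    (r : ℝ) (hr : r ∈ Set.Ioc (0 : ℝ) 1) (hσr : σ r = x')
    (hmono : dist x y + dist x' y' ≤ dist x y' + dist x' y) :
    ∃ (τ : ℝ → X) (s t t' : ℝ), IsMinCurve τ ∧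
      0 < s ∧ s ≤ t ∧ t ≤ 1 ∧ s ≤ t' ∧ t' ≤ 1 ∧
      τ 0 = x ∧ τ s = x' ∧ τ t = y ∧ τ t' = y' :=
  stmt_4_general hgeo hnb x y x' y' hxx' σ hσ hσ0 hσ1 r hr hσr hmono
end

section
/- Let (X,d) be a geodesic and non-branching metric space and u : X → ℝ a 1-Lipschitz function. Let x, y, x', y' ∈ X with x ≠ y and x ≠ x'. Assume u(x) − u(y) = d(x,y) and u(x') − u(y') = d(x',y'); assume there are a constant-speed minimal curve σ : [0,1] → X with σ(0) = x, σ(1) = y and a parameter r ∈ (0,1] with σ(r) = x' (x' lies on a minimal curve from x to y); and assume the monotonicity inequality d(x,y)² + d(x',y')² ≤ d(x,y')² + d(x',y)². Then the four points lie, in the order x, x', y, y', on one minimal curve: there exist a constant-speed minimal curve τ : [0,1] → X and reals s, t, t' with 0 < s ≤ t ≤ t' ≤ 1 such that τ(0) = x, τ(s) = x', τ(t) = y and τ(t') = y'. -/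
open Set

noncomputable def curveConcat {X : Type*} (σ η : ℝ → X) (s₀ : ℝ) (s : ℝ) : X :=
  if s ≤ s₀ then σ (s / s₀) else η ((s - s₀) / (1 - s₀))

section curveConcat

variable {X : Type*} {σ η : ℝ → X} {s₀ : ℝ}

theorem curveConcat_of_le {s : ℝ} (hs : s ≤ s₀) : curveConcat σ η s₀ s = σ (s / s₀) :=
  if_pos hs

theorem curveConcat_of_ge (hση : σ 1 = η 0) (hs₀ : 0 < s₀) {s : ℝ} (hs : s₀ ≤ s) :
    curveConcat σ η s₀ s = η ((s - s₀) / (1 - s₀)) := by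
  rcases hs.eq_or_lt with rfl | hlt
  · rw [curveConcat_of_le le_rfl, div_self hs₀.ne', sub_self, zero_div, hση]
  · exact if_neg hlt.not_ge

theorem curveConcat_zero (hs₀ : 0 ≤ s₀) : curveConcat σ η s₀ 0 = σ 0 := by
  rw [curveConcat_of_le hs₀, zero_div]

theorem curveConcat_self (hs₀ : 0 < s₀) : curveConcat σ η s₀ s₀ = σ 1 := by
  rw [curveConcat_of_le le_rfl, div_self hs₀.ne']

end curveConcat

section MetricSpace

variable {X : Type*} [MetricSpace X]

namespace LipschitzWith

variable {u : X → ℝ}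

theorem sub_le_dist (hu : LipschitzWith 1 u) (p q : X) : u p - u q ≤ dist p q := by
  have := hu.le_add_mul p q
  rw [NNReal.coe_one, one_mul] at this
  linarith

theorem sub_eq_dist_of_dist_add_dist_eq (hu : LipschitzWith 1 u) {p m q : X}
    (hpq : u p - u q = dist p q) (hm : dist p m + dist m q = dist p q) :
    u p - u m = dist p m := by
  linarith [hu.sub_le_dist p m, hu.sub_le_dist m q]

theorem dist_eq_add_of_sub_eq_dist (hu : LipschitzWith 1 u) {p m q : X}
    (hpm : u p - u m = dist p m) (hmq : u m - u q = dist m q) :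
    dist p q = dist p m + dist m q := by
  linarith [hu.sub_le_dist p q, dist_triangle p m q]

end LipschitzWith

theorem isMinCurve_of_dist_le {γ : ℝ → X} {L : ℝ}
    (hle : ∀ s s', 0 ≤ s → s ≤ s' → s' ≤ 1 → dist (γ s) (γ s') ≤ (s' - s) * L)
    (hL : L ≤ dist (γ 0) (γ 1)) : IsMinCurve γ := by
  have h01 : dist (γ 0) (γ 1) = L := by linarith [hle 0 1 le_rfl zero_le_one le_rfl]
  intro s s' hs hss' hs'
  have hsplit : dist (γ 0) (γ 1) ≤ dist (γ 0) (γ s) + dist (γ s) (γ s') + dist (γ s') (γ 1) :=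
    dist_triangle4 _ _ _ _
  rw [h01]
  linarith [hle 0 s le_rfl hs (hss'.trans hs'), hle s' 1 (hs.trans hss') hs' le_rfl,
    hle s s' hs hss' hs']

namespace IsMinCurve

variable {σ η : ℝ → X}

theorem comp_mul_right (hσ : IsMinCurve σ) {t : ℝ} (ht₀ : 0 ≤ t) (ht₁ : t ≤ 1) :
    IsMinCurve fun s => σ (s * t) := by
  intro s s' hs hss' hs'
  have hs't : s' * t ≤ 1 := by nlinarith
  simp only [zero_mul, one_mul]
  rw [hσ _ _ (by positivity) (by gcongr) hs't, hσ 0 t le_rfl ht₀ ht₁]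
  ring

end IsMinCurve

section curveConcat

variable {σ η : ℝ → X} {s₀ L : ℝ}

theorem curveConcat_one (hση : σ 1 = η 0) (hs₀ : s₀ ∈ Ioc 0 1)
    (hηL : dist (η 0) (η 1) = (1 - s₀) * L) : curveConcat σ η s₀ 1 = η 1 := by
  rcases hs₀.2.lt_or_eq with hlt | rfl
  · rw [curveConcat_of_ge hση hs₀.1 hs₀.2, div_self (sub_ne_zero.2 hlt.ne')]
  · rw [curveConcat_self zero_lt_one, hση, ← dist_eq_zero, hηL, sub_self, zero_mul]

theorem isMinCurve_curveConcat (hσ : IsMinCurve σ) (hη : IsMinCurve η) (hση : σ 1 = η 0)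
    (hs₀ : s₀ ∈ Ioc 0 1) (hσL : dist (σ 0) (σ 1) = s₀ * L)
    (hηL : dist (η 0) (η 1) = (1 - s₀) * L) (hL : L ≤ dist (σ 0) (η 1)) :
    IsMinCurve (curveConcat σ η s₀) := by
  obtain ⟨hs₀₀, hs₀₁⟩ := hs₀
  have hfirst : ∀ s s', 0 ≤ s → s ≤ s' → s' ≤ s₀ →
      dist (curveConcat σ η s₀ s) (curveConcat σ η s₀ s') = (s' - s) * L := by
    intro s s' hs hss' hs'
    rw [curveConcat_of_le (hss'.trans hs'), curveConcat_of_le hs',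
      hσ _ _ (by positivity) (by gcongr) ((div_le_one hs₀₀).2 hs'), hσL]
    field_simp
  have hsecond : ∀ s s', s₀ ≤ s → s ≤ s' → s' ≤ 1 → s₀ < 1 →
      dist (curveConcat σ η s₀ s) (curveConcat σ η s₀ s') = (s' - s) * L := by
    intro s s' hs hss' hs' hlt
    have h1s₀ : 0 < 1 - s₀ := sub_pos.2 hlt
    rw [curveConcat_of_ge hση hs₀₀ hs, curveConcat_of_ge hση hs₀₀ (hs.trans hss'),
      hη _ _ (div_nonneg (sub_nonneg.2 hs) h1s₀.le) (by gcongr)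
        ((div_le_one h1s₀).2 (by linarith)), hηL]
    field_simp
    ring
  refine isMinCurve_of_dist_le (L := L) (fun s s' hs hss' hs' => ?_) ?_
  · rcases le_or_gt s' s₀ with hs's₀ | hs₀s'
    · exact (hfirst s s' hs hss' hs's₀).le
    have hlt : s₀ < 1 := hs₀s'.trans_le hs'
    rcases le_or_gt s s₀ with hss₀ | hs₀s
    · calc _ ≤ dist (curveConcat σ η s₀ s) (curveConcat σ η s₀ s₀)
              + dist (curveConcat σ η s₀ s₀) (curveConcat σ η s₀ s') := dist_triangle _ _ _
        _ = (s' - s) * L := by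
          rw [hfirst s s₀ hs hss₀ le_rfl, hsecond s₀ s' le_rfl hs₀s'.le hs' hlt]
          ring
    · exact (hsecond s s' hs₀s.le hss' hs' hlt).le
  · rwa [curveConcat_zero hs₀₀.le, curveConcat_one hση ⟨hs₀₀, hs₀₁⟩ hηL]

end curveConcat

theorem IsNonBranching.apply_one_eq_of_eqOn (hnb : IsNonBranching X) {σ τ : ℝ → X}
    (hσ : IsMinCurve σ) (hτ : IsMinCurve τ) {r t : ℝ} (hr : r ∈ Ioc 0 1) (ht₀ : 0 ≤ t)
    (ht₁ : t ≤ 1) (h : ∀ s ∈ Icc 0 r, σ s = τ (s * t)) : σ 1 = τ t := by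
  simpa using hnb σ _ hσ (hτ.comp_mul_right ht₀ ht₁) 0 r le_rfl hr.1 hr.2 h 1
    ⟨zero_le_one, le_rfl⟩

theorem IsNonBranching.exists_isMinCurve_of_dist_eq_add (hgeo : IsGeodesicSpace X)
    (hnb : IsNonBranching X) {σ : ℝ → X} (hσ : IsMinCurve σ) {r : ℝ} (hr : r ∈ Ioc 0 1)
    {y' : X} (hx' : σ 0 ≠ σ r) (hy' : dist (σ 0) y' = dist (σ 0) (σ r) + dist (σ r) y')
    (hy : dist (σ r) (σ 1) ≤ dist (σ r) y') :
    ∃ (τ : ℝ → X) (s t t' : ℝ), IsMinCurve τ ∧ 0 < s ∧ s ≤ t ∧ t ≤ t' ∧ t' ≤ 1 ∧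
      τ 0 = σ 0 ∧ τ s = σ r ∧ τ t = σ 1 ∧ τ t' = y' := by
  obtain ⟨η, hη, hη0, hη1⟩ := hgeo (σ r) y'
  obtain ⟨hr₀, hr₁⟩ := hr
  set D := dist (σ 0) (σ 1)
  set a := dist (σ 0) (σ r)
  set L := a + dist (σ r) y' with hL
  have ha : a = r * D := by simpa using hσ 0 r le_rfl hr₀.le hr₁
  have hrD : dist (σ r) (σ 1) = (1 - r) * D := by simpa using hσ r 1 hr₀.le hr₁ le_rfl
  have ha₀ : 0 < a := dist_pos.2 hx'
  have hD₀ : 0 < D := by nlinarith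
  have hL₀ : 0 < L := by positivity
  have hDL : D ≤ L := by linarith
  have haL : a ≤ L := le_add_of_nonneg_right dist_nonneg
  have hs₀ : a / L ∈ Ioc 0 1 := ⟨by positivity, div_le_one_of_le₀ haL hL₀.le⟩
  have hηL : dist (η 0) (η 1) = (1 - a / L) * L := by
    rw [hη0, hη1, sub_mul, one_mul, div_mul_cancel₀ _ hL₀.ne', hL]
    ring
  have hτ : IsMinCurve (curveConcat (fun s => σ (s * r)) η (a / L)) :=
    isMinCurve_curveConcat (hσ.comp_mul_right hr₀.le hr₁) hη (by simp [hη0]) hs₀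
      (by simp [div_mul_cancel₀ _ hL₀.ne', a]) hηL (by simp [hη1, hy'])
  have hτσ : ∀ s ∈ Icc 0 r,
      σ s = curveConcat (fun s => σ (s * r)) η (a / L) (s * (D / L)) := by
    intro s hs
    rw [curveConcat_of_le (by rw [ha, mul_div_assoc]; gcongr; exact hs.2)]
    congr 1
    rw [ha]
    field_simp
  refine ⟨curveConcat (fun s => σ (s * r)) η (a / L), a / L, D / L, 1, hτ, hs₀.1, ?_,
    div_le_one_of_le₀ hDL hL₀.le, le_rfl, ?_, ?_, ?_, ?_⟩
  · gcongr
    nlinarith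
  · rw [curveConcat_zero hs₀.1.le, zero_mul]
  · rw [curveConcat_self hs₀.1, one_mul]
  · exact (hnb.apply_one_eq_of_eqOn hσ hτ ⟨hr₀, hr₁⟩ (by positivity)
      (div_le_one_of_le₀ hDL hL₀.le) hτσ).symm
  · exact (curveConcat_one (σ := fun s => σ (s * r)) (by simp [hη0]) hs₀ hηL).trans hη1

end MetricSpace

theorem stmt_7_general {X : Type*} [MetricSpace X]
    (hgeo : IsGeodesicSpace X) (hnb : IsNonBranching X)
    (u : X → ℝ) (hu : LipschitzWith 1 u)
    (x y x' y' : X) (hxx' : x ≠ x')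
    (h1 : u x - u y = dist x y) (h2 : u x' - u y' = dist x' y')
    (σ : ℝ → X) (hσ : IsMinCurve σ) (hσ0 : σ 0 = x) (hσ1 : σ 1 = y)
    (r : ℝ) (hr : r ∈ Set.Ioc (0 : ℝ) 1) (hσr : σ r = x')
    (hmono : dist x y ^ 2 + dist x' y' ^ 2 ≤ dist x y' ^ 2 + dist x' y ^ 2) :
    ∃ (τ : ℝ → X) (s t t' : ℝ), IsMinCurve τ ∧
      0 < s ∧ s ≤ t ∧ t ≤ t' ∧ t' ≤ 1 ∧
      τ 0 = x ∧ τ s = x' ∧ τ t = y ∧ τ t' = y' := by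
  subst hσ0 hσ1 hσr
  have hxx'y : dist (σ 0) (σ r) + dist (σ r) (σ 1) = dist (σ 0) (σ 1) := by
    rw [hσ 0 r le_rfl hr.1.le hr.2, hσ r 1 hr.1.le hr.2 le_rfl]
    ring
  have hxy' : dist (σ 0) y' = dist (σ 0) (σ r) + dist (σ r) y' :=
    hu.dist_eq_add_of_sub_eq_dist (hu.sub_eq_dist_of_dist_add_dist_eq h1 hxx'y) h2
  have hx'y : dist (σ r) (σ 1) ≤ dist (σ r) y' := by
    -- `hmono` reads `(a + b)² + c² ≤ (a + c)² + b²`, i.e. `a * (b - c) ≤ 0`, with `a > 0`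
    rw [hxy', ← hxx'y] at hmono
    nlinarith [dist_pos.2 hxx', dist_nonneg (x := σ r) (y := y'),
      dist_nonneg (x := σ r) (y := σ 1)]
  exact hnb.exists_isMinCurve_of_dist_eq_add hgeo hσ hr hxx' hxy' hx'y

theorem stmt_7 {X : Type*} [MetricSpace X]
    (hgeo : IsGeodesicSpace X) (hnb : IsNonBranching X)
    (u : X → ℝ) (hu : LipschitzWith 1 u)
    (x y x' y' : X) (hxy : x ≠ y) (hxx' : x ≠ x')
    (h1 : u x - u y = dist x y) (h2 : u x' - u y' = dist x' y')
    (σ : ℝ → X) (hσ : IsMinCurve σ) (hσ0 : σ 0 = x) (hσ1 : σ 1 = y)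
    (r : ℝ) (hr : r ∈ Set.Ioc (0 : ℝ) 1) (hσr : σ r = x')
    (hmono : dist x y ^ 2 + dist x' y' ^ 2 ≤ dist x y' ^ 2 + dist x' y ^ 2) :
    ∃ (τ : ℝ → X) (s t t' : ℝ), IsMinCurve τ ∧
      0 < s ∧ s ≤ t ∧ t ≤ t' ∧ t' ≤ 1 ∧
      τ 0 = x ∧ τ s = x' ∧ τ t = y ∧ τ t' = y' :=
  stmt_7_general hgeo hnb u hu x y x' y' hxx' h1 h2 σ hσ hσ0 hσ1 r hr hσr hmono
end

section
/- Let (X,d) be a non-branching metric space, ε > 0, and T : X → X a map. For each x ∈ X let σ_x : [0,1] → X be a constant-speed minimal curve with σ_x(0) = x and σ_x(1) = T(x). Let A ⊆ X be a set such that for all x, x' ∈ A the cyclical monotonicity inequality c_ε(x,T(x)) + c_ε(x',T(x')) ≤ c_ε(x,T(x')) + c_ε(x',T(x)) holds, where c_ε(a,b) := d(a,b) + ε·d(a,b)². Then for every t ∈ [0,1), the map x ↦ σ_x(t) is injective on A. -/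
/-!
If `σ_x(t) = σ_{x'}(t) = z` with `0 < t < 1`, going through `z` gives
`d(x, T x') ≤ t a + (1 - t) b` and `d(x', T x) ≤ (1 - t) a + t b`, where `a = d(x, T x)` and
`b = d(x', T x')`. Since `r ↦ r + ε r²` is strictly convex, cyclical monotonicity forces `a = b`
and `d(x, T x') = a`. Then following `σ_x` up to time `t` and `σ_{x'}` afterwards is again a
constant-speed minimal curve, which agrees with `σ_{x'}` on `[t, 1]`; by non-branching the two
curves have the same starting point, i.e. `x = x'`.
-/

namespace IsMinCurve

variable {X : Type*} [MetricSpace X] {σ τ : ℝ → X} {s t : ℝ}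

lemma dist_zero_left (hσ : IsMinCurve σ) (hs0 : 0 ≤ s) (hs1 : s ≤ 1) :
    dist (σ 0) (σ s) = s * dist (σ 0) (σ 1) := by
  simpa using hσ 0 s le_rfl hs0 hs1

lemma dist_one_right (hσ : IsMinCurve σ) (hs0 : 0 ≤ s) (hs1 : s ≤ 1) :
    dist (σ s) (σ 1) = (1 - s) * dist (σ 0) (σ 1) :=
  hσ s 1 hs0 hs1 le_rfl

lemma dist_le_of_apply_eq (hσ : IsMinCurve σ) (hτ : IsMinCurve τ) (hst : σ t = τ t)
    (ht0 : 0 ≤ t) (ht1 : t ≤ 1) :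
    dist (σ 0) (τ 1) ≤ t * dist (σ 0) (σ 1) + (1 - t) * dist (τ 0) (τ 1) :=
  calc dist (σ 0) (τ 1) ≤ dist (σ 0) (σ t) + dist (τ t) (τ 1) :=
        hst ▸ dist_triangle _ _ _
    _ = _ := by rw [hσ.dist_zero_left ht0 ht1, hτ.dist_one_right ht0 ht1]

lemma piecewise (hσ : IsMinCurve σ) (hτ : IsMinCurve τ) (hst : σ t = τ t) (ht0 : 0 ≤ t)
    (ht1 : t < 1) (hlen : dist (τ 0) (τ 1) = dist (σ 0) (σ 1))
    (hends : dist (σ 0) (τ 1) = dist (σ 0) (σ 1)) :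
    IsMinCurve fun s => if s ≤ t then σ s else τ s := by
  intro s s' hs hss' hs'
  simp only [if_pos ht0, if_neg (not_le.2 ht1), hends]
  set L := dist (σ 0) (σ 1)
  by_cases hs't : s' ≤ t
  · simp only [if_pos hs't, if_pos (hss'.trans hs't)]
    exact hσ s s' hs hss' hs'
  by_cases hst' : s ≤ t
  · simp only [if_pos hst', if_neg hs't]
    rw [not_le] at hs't
    have upper : dist (σ s) (τ s') ≤ (s' - s) * L :=
      calc dist (σ s) (τ s') ≤ dist (σ s) (σ t) + dist (τ t) (τ s') :=
            hst ▸ dist_triangle _ _ _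
        _ = (s' - s) * L := by
            rw [hσ s t hs hst' ht1.le, hτ t s' ht0 hs't.le hs', hlen]; ring
    have lower : L ≤ s * L + dist (σ s) (τ s') + (1 - s') * L := by
      calc L = dist (σ 0) (τ 1) := hends.symm
        _ ≤ dist (σ 0) (σ s) + dist (σ s) (τ s') + dist (τ s') (τ 1) := dist_triangle4 _ _ _ _
        _ = _ := by
            rw [hσ.dist_zero_left hs (hss'.trans hs'), hτ.dist_one_right (hs.trans hss') hs',
              hlen]
    linarith
  · simp only [if_neg hst', if_neg hs't]
    rw [hτ s s' hs hss' hs', hlen]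

end IsMinCurve

lemma IsNonBranching.apply_zero_eq_of_apply_eq {X : Type*} [MetricSpace X]
    (hnb : IsNonBranching X) {σ τ : ℝ → X} {t : ℝ} (hσ : IsMinCurve σ) (hτ : IsMinCurve τ)
    (hst : σ t = τ t) (ht0 : 0 ≤ t) (ht1 : t < 1)
    (hlen : dist (τ 0) (τ 1) = dist (σ 0) (σ 1))
    (hends : dist (σ 0) (τ 1) = dist (σ 0) (σ 1)) : σ 0 = τ 0 := by
  have hglue : ∀ s ∈ Set.Icc t 1, (if s ≤ t then σ s else τ s) = τ s := by
    rintro s ⟨hts, -⟩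
    split_ifs with hs
    · rwa [le_antisymm hs hts]
    · rfl
  simpa [ht0] using hnb _ τ (hσ.piecewise hτ hst ht0 ht1 hlen hends) hτ t 1 ht0 ht1 le_rfl
    hglue 0 ⟨le_rfl, zero_le_one⟩

/-- Strict convexity of `r ↦ r + ε r²` in the form needed for cyclical monotonicity. -/
lemma eq_and_eq_of_cost_le_of_le_convexComb {ε t a b u v : ℝ} (hε : 0 < ε) (ht0 : 0 < t)
    (ht1 : t < 1) (hu0 : 0 ≤ u) (hv0 : 0 ≤ v) (hu : u ≤ t * a + (1 - t) * b)
    (hv : v ≤ (1 - t) * a + t * b)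
    (hcost : (a + ε * a ^ 2) + (b + ε * b ^ 2) ≤ (u + ε * u ^ 2) + (v + ε * v ^ 2)) :
    a = b ∧ u = a := by
  have hu2 : u ^ 2 ≤ (t * a + (1 - t) * b) ^ 2 := pow_le_pow_left₀ hu0 hu 2
  have hv2 : v ^ 2 ≤ ((1 - t) * a + t * b) ^ 2 := pow_le_pow_left₀ hv0 hv 2
  have hab : a = b := by
    have hgap : 0 < ε * (t * (1 - t)) := mul_pos hε (mul_pos ht0 (by linarith))
    -- the convex combinations lose exactly `2 ε t (1 - t) (a - b)²` of cost
    have hloss : ε * (t * (1 - t)) * (a - b) ^ 2 ≤ 0 := by nlinarith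
    have hsq : (a - b) ^ 2 = 0 :=
      le_antisymm (nonpos_of_mul_nonpos_right hloss hgap) (sq_nonneg _)
    exact sub_eq_zero.1 (pow_eq_zero_iff two_ne_zero |>.1 hsq)
  subst hab
  refine ⟨rfl, le_antisymm (by linarith) ?_⟩
  have hua : u ≤ a := by linarith
  have hva : v ≤ a := by linarith
  nlinarith [pow_le_pow_left₀ hu0 hua 2, pow_le_pow_left₀ hv0 hva 2]

theorem stmt_9 {X : Type*} [MetricSpace X] (hnb : IsNonBranching X)
    (ε : ℝ) (hε : 0 < ε) (T : X → X) (σ : X → ℝ → X)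
    (hσ : ∀ x, IsMinCurve (σ x) ∧ σ x 0 = x ∧ σ x 1 = T x)
    (A : Set X)
    (hA : ∀ x ∈ A, ∀ x' ∈ A,
      (dist x (T x) + ε * dist x (T x) ^ 2) +
        (dist x' (T x') + ε * dist x' (T x') ^ 2) ≤
      (dist x (T x') + ε * dist x (T x') ^ 2) +
        (dist x' (T x) + ε * dist x' (T x) ^ 2))
    (t : ℝ) (ht : t ∈ Set.Ico (0 : ℝ) 1) :
    Set.InjOn (fun x => σ x t) A := by
  intro x hx x' hx' hmeet
  obtain ⟨hmin, h0, h1⟩ := hσ x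
  obtain ⟨hmin', h0', h1'⟩ := hσ x'
  obtain ⟨ht0, ht1⟩ := ht
  rcases ht0.eq_or_lt with rfl | htpos
  · simpa [h0, h0'] using hmeet
  have hu := hmin.dist_le_of_apply_eq hmin' hmeet ht0 ht1.le
  have hv := hmin'.dist_le_of_apply_eq hmin hmeet.symm ht0 ht1.le
  rw [h0, h1, h0', h1'] at hu hv
  obtain ⟨hab, hends⟩ := eq_and_eq_of_cost_le_of_le_convexComb hε htpos ht1 dist_nonneg
    dist_nonneg hu (by linarith) (hA x hx x' hx')
  have := hnb.apply_zero_eq_of_apply_eq hmin hmin' hmeet ht0 ht1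
    (by rw [h0, h1, h0', h1', hab]) (by rw [h0, h1, h1', hends])
  rwa [h0, h0'] at this
end

section
/- Let X be a metric space equipped with its Borel σ-algebra, λ a Borel measure on X, and μ̄ a Borel probability measure on X with μ̄ ≪ λ and density ρ satisfying ρ ≤ M λ-almost everywhere, for some constant M ∈ [0,∞). Let F : X → X be Borel measurable, A ⊆ X a Borel set with μ̄(A) = 1, and C ∈ (0,∞) a constant such that λ(E) ≤ C·λ(F(E)) for every subset E ⊆ A (where λ of an arbitrary set is taken as the induced outer measure). Then the pushforward F♯μ̄ is absolutely continuous with respect to λ, and moreover (F♯μ̄)(B) ≤ C·M·λ(B) for every Borel set B ⊆ X; in particular F♯μ̄ has a density bounded λ-a.e. by C·M. -/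
open MeasureTheory

/-! Away from the null set `Aᶜ`, the preimage `F ⁻¹' B` is a subset `E` of `A` with `F '' E ⊆ B`,
so `μ (F ⁻¹' B) ≤ M * λ E ≤ C * M * λ B`. The pushforward is therefore dominated by
`(C * M) • λ`, which gives both absolute continuity and the density bound. -/

namespace MeasureTheory.Measure

variable {X : Type*} [MeasurableSpace X]

lemma withDensity_le_smul_of_ae_le {lam : Measure X} {ρ : X → ENNReal} {M : ENNReal}
    (hρM : ∀ᵐ x ∂lam, ρ x ≤ M) : lam.withDensity ρ ≤ M • lam := by
  rw [← withDensity_const]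
  exact withDensity_mono hρM

lemma map_le_smul_of_le_mul_measure_image {lam μ : Measure X} {F : X → X} (hF : Measurable F)
    {A : Set X} (hμA : μ Aᶜ = 0) {C M : ENNReal} (hμ : μ ≤ M • lam)
    (hcontr : ∀ E ⊆ A, lam E ≤ C * lam (F '' E)) :
    μ.map F ≤ (C * M) • lam := by
  refine le_iff.2 fun B hB => ?_
  have hE : F '' (F ⁻¹' B ∩ A) ⊆ B :=
    (Set.image_mono Set.inter_subset_left).trans (Set.image_preimage_subset F B)
  calc μ.map F B = μ (F ⁻¹' B ∩ A) := by rw [map_apply hF hB, measure_inter_conull hμA]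
    _ ≤ M * lam (F ⁻¹' B ∩ A) := le_iff'.1 hμ _
    _ ≤ M * (C * lam (F '' (F ⁻¹' B ∩ A))) := by gcongr; exact hcontr _ Set.inter_subset_right
    _ ≤ M * (C * lam B) := by gcongr
    _ = ((C * M) • lam) B := by rw [smul_apply, smul_eq_mul]; ring

end MeasureTheory.Measure

theorem stmt_10_general {X : Type*} [MeasurableSpace X]
    (lam : Measure X) (μ : Measure X) [IsProbabilityMeasure μ]
    (ρ : X → ENNReal)
    (M : ENNReal)
    (hmulam : μ = lam.withDensity ρ)
    (hρM : ∀ᵐ x ∂lam, ρ x ≤ M)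
    (F : X → X) (hF : Measurable F)
    (A : Set X) (hA : MeasurableSet A) (hμA : μ A = 1)
    (C : ENNReal)
    (hcontr : ∀ E : Set X, E ⊆ A → lam E ≤ C * lam (F '' E)) :
    μ.map F ≪ lam ∧
      ∀ B : Set X, MeasurableSet B → (μ.map F) B ≤ C * M * lam B := by
  have hμ : μ ≤ M • lam := hmulam ▸ Measure.withDensity_le_smul_of_ae_le hρM
  have hmap := Measure.map_le_smul_of_le_mul_measure_image hF
    (prob_compl_eq_zero_iff hA |>.2 hμA) hμ hcontr
  exact ⟨Measure.absolutelyContinuous_of_le_smul hmap,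
    fun B _ => Measure.le_iff'.1 hmap B⟩

theorem stmt_10 {X : Type*} [MetricSpace X] [MeasurableSpace X] [BorelSpace X]
    (lam : Measure X) (μ : Measure X) [IsProbabilityMeasure μ]
    (ρ : X → ENNReal) (hρmeas : Measurable ρ)
    (M : ENNReal) (hM : M ≠ ⊤)
    (hmulam : μ = lam.withDensity ρ)
    (hρM : ∀ᵐ x ∂lam, ρ x ≤ M)
    (F : X → X) (hF : Measurable F)
    (A : Set X) (hA : MeasurableSet A) (hμA : μ A = 1)
    (C : ENNReal) (hC0 : 0 < C) (hCtop : C ≠ ⊤)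
    (hcontr : ∀ E : Set X, E ⊆ A → lam E ≤ C * lam (F '' E)) :
    μ.map F ≪ lam ∧
      ∀ B : Set X, MeasurableSet B → (μ.map F) B ≤ C * M * lam B :=
  stmt_10_general lam μ ρ M hmulam hρM F hF A hA hμA C hcontr
end

section
/- Let X be a complete separable metric space, c : X × X → [0,∞] a Borel cost function, and γ a finite Borel measure on X × X with ∫ c dγ < ∞ which is optimal between its own marginals, i.e., ∫ c dγ ≤ ∫ c dγ' for every finite Borel measure γ' on X × X having the same first marginal and the same second marginal as γ. Then for every Borel set U ⊆ X × X, the restriction γ⌊U is optimal between its own marginals: ∫ c d(γ⌊U) ≤ ∫ c dη for every finite Borel measure η on X × X having the same first and second marginals as γ⌊U. -/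
open MeasureTheory

def IsOptimalCoupling {α β : Type*} [MeasurableSpace α] [MeasurableSpace β]
    (c : α × β → ENNReal) (γ : Measure (α × β)) : Prop :=
  ∀ γ' : Measure (α × β), IsFiniteMeasure γ' →
    γ'.map Prod.fst = γ.map Prod.fst → γ'.map Prod.snd = γ.map Prod.snd →
    ∫⁻ p, c p ∂γ ≤ ∫⁻ p, c p ∂γ'

lemma MeasureTheory.Measure.map_add_restrict_compl_eq {α β : Type*}
    [MeasurableSpace α] [MeasurableSpace β]
    {γ η : Measure α} {U : Set α} (hU : MeasurableSet U) {f : α → β} (hf : Measurable f)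
    (h : η.map f = (γ.restrict U).map f) :
    (η + γ.restrict Uᶜ).map f = γ.map f := by
  rw [Measure.map_add _ _ hf, h, ← Measure.map_add _ _ hf, Measure.restrict_add_restrict_compl hU]

/-- `η + γ⌊Uᶜ` is a competitor for `γ`; the finite cost of `γ⌊Uᶜ` cancels from the comparison. -/
theorem IsOptimalCoupling.restrict {α β : Type*} [MeasurableSpace α] [MeasurableSpace β]
    {c : α × β → ENNReal} {γ : Measure (α × β)} [IsFiniteMeasure γ]
    (hfin : ∫⁻ p, c p ∂γ < ⊤) (hopt : IsOptimalCoupling c γ)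
    {U : Set (α × β)} (hU : MeasurableSet U) :
    IsOptimalCoupling c (γ.restrict U) := by
  intro η hη h1 h2
  have hcompl : ∫⁻ p in Uᶜ, c p ∂γ ≠ ⊤ :=
    ne_top_of_le_ne_top hfin.ne (setLIntegral_le_lintegral _ _)
  have hcompetitor : ∫⁻ p, c p ∂γ ≤ ∫⁻ p, c p ∂(η + γ.restrict Uᶜ) :=
    hopt _ inferInstance (Measure.map_add_restrict_compl_eq hU measurable_fst h1)
      (Measure.map_add_restrict_compl_eq hU measurable_snd h2)
  rw [← lintegral_add_compl _ hU, lintegral_add_measure] at hcompetitor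
  exact (ENNReal.add_le_add_iff_right hcompl).1 hcompetitor

theorem stmt_11_general {X : Type*} [MeasurableSpace X]
    (c : X × X → ENNReal)
    (γ : Measure (X × X)) [IsFiniteMeasure γ]
    (hfin : ∫⁻ p, c p ∂γ < ⊤)
    (hopt : ∀ γ' : Measure (X × X), IsFiniteMeasure γ' →
      γ'.map Prod.fst = γ.map Prod.fst → γ'.map Prod.snd = γ.map Prod.snd →
      ∫⁻ p, c p ∂γ ≤ ∫⁻ p, c p ∂γ') :
    ∀ U : Set (X × X), MeasurableSet U →
      ∀ η : Measure (X × X), IsFiniteMeasure η →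
        η.map Prod.fst = (γ.restrict U).map Prod.fst →
        η.map Prod.snd = (γ.restrict U).map Prod.snd →
        ∫⁻ p, c p ∂(γ.restrict U) ≤ ∫⁻ p, c p ∂η :=
  fun _ hU => IsOptimalCoupling.restrict hfin hopt hU

theorem stmt_11 {X : Type*} [MetricSpace X] [CompleteSpace X]
    [TopologicalSpace.SeparableSpace X] [MeasurableSpace X] [BorelSpace X]
    (c : X × X → ENNReal) (hc : Measurable c)
    (γ : Measure (X × X)) [IsFiniteMeasure γ]
    (hfin : ∫⁻ p, c p ∂γ < ⊤)
    (hopt : ∀ γ' : Measure (X × X), IsFiniteMeasure γ' →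
      γ'.map Prod.fst = γ.map Prod.fst → γ'.map Prod.snd = γ.map Prod.snd →
      ∫⁻ p, c p ∂γ ≤ ∫⁻ p, c p ∂γ') :
    ∀ U : Set (X × X), MeasurableSet U →
      ∀ η : Measure (X × X), IsFiniteMeasure η →
        η.map Prod.fst = (γ.restrict U).map Prod.fst →
        η.map Prod.snd = (γ.restrict U).map Prod.snd →
        ∫⁻ p, c p ∂(γ.restrict U) ≤ ∫⁻ p, c p ∂η :=
  stmt_11_general c γ hfin hopt
end

section
/- Let (X,d) be a separable metric space and μ a locally finite, uniformly locally doubling Borel measure on X. Let γ be a Borel probability measure on X × X whose first marginal π₁♯γ is absolutely continuous with respect to μ. For a finite Borel measure m on X define its upper density ρ_m(x) := limsup_{r→0⁺} m(B(x,r))/μ(B(x,r)), and write ρ := ρ_{π₁♯γ}. Then γ is concentrated on a set Γ (there is a Borel set Γ with γ(Γ) = 1) such that for every (x,y) ∈ Γ and every r > 0 there exist y' ∈ X and r' > 0 with: (i) y ∈ B(y',r') and the closure of B(y',r') is contained in B(y,r); (ii) x is a Lebesgue point of ρ and ρ(x) < ∞; (iii) x is a Lebesgue point of ρ' := ρ_{π₁♯(γ⌊(X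 × B(y',r')))} and ρ'(x) > 0. -/
open MeasureTheory Filter

/-- The upper density at `x` of a measure `m` with respect to a reference
measure `μ` on a metric space: `limsup_{r→0⁺} m(B(x,r))/μ(B(x,r))`. -/
noncomputable def upperDensity {X : Type*} [MetricSpace X] [MeasurableSpace X]
    (μ m : Measure X) (x : X) : ENNReal :=
  limsup (fun r : ℝ => m (Metric.ball x r) / μ (Metric.ball x r))
    (nhdsWithin 0 (Set.Ioi 0))

/-- `x` is a Lebesgue point of the (`ℝ≥0∞`-valued) function `f` with respect to
`μ`: the averages of `|f - f x|` over small balls centered at `x` tend to `0`.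
(For extended nonnegative reals, `|a - b| = (a - b) + (b - a)` using truncated
subtraction.) -/
def IsLebesguePoint {X : Type*} [MetricSpace X] [MeasurableSpace X]
    (μ : Measure X) (f : X → ENNReal) (x : X) : Prop :=
  Tendsto
    (fun r : ℝ =>
      (∫⁻ z in Metric.ball x r, (f z - f x) + (f x - f z) ∂μ) / μ (Metric.ball x r))
    (nhdsWithin 0 (Set.Ioi 0)) (nhds 0)

/-! For a doubling measure `μ`, the Lebesgue differentiation theorem along closed balls transfers
to open balls, since an open ball is an increasing union of closed balls. Hence for every finite
`m ≪ μ` the upper density `ρ_m` agrees `μ`-a.e. with `dm/dμ`, and `m`-a.e. point is a Lebesgue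
point of `ρ_m` with `0 < ρ_m < ∞`. Apply this to `π₁♯γ` and to the marginals of `γ` restricted to
`X × B`, for the countably many balls `B` with centres in a countable dense set and rational radii;
every ball `B(y, r)` contains the closure of such a ball around `y`. -/

open Metric Set Topology
open scoped ENNReal

theorem ENNReal.ofReal_sub_add_ofReal_sub {a b : ℝ} (ha : 0 ≤ a) (hb : 0 ≤ b) :
    (ENNReal.ofReal a - ENNReal.ofReal b) + (ENNReal.ofReal b - ENNReal.ofReal a) = ‖a - b‖ₑ := by
  rw [← ENNReal.ofReal_sub _ hb, ← ENNReal.ofReal_sub _ ha, Real.enorm_eq_ofReal_abs]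
  rcases le_total a b with h | h <;> simp [h, abs_of_nonneg, abs_of_nonpos]

theorem MeasureTheory.exists_measurableSet_measure_eq_one_of_ae {α : Type*} [MeasurableSpace α]
    {μ : Measure α} [IsProbabilityMeasure μ] {P : α → Prop} (h : ∀ᵐ x ∂μ, P x) :
    ∃ s, MeasurableSet s ∧ μ s = 1 ∧ ∀ x ∈ s, P x := by
  refine ⟨(toMeasurable μ {x | ¬P x})ᶜ, (measurableSet_toMeasurable _ _).compl, ?_,
    fun x hx => ?_⟩
  · rw [prob_compl_eq_one_iff (measurableSet_toMeasurable _ _), measure_toMeasurable]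
    exact ae_iff.1 h
  · by_contra hPx
    exact hx (subset_toMeasurable _ _ hPx)

theorem MeasureTheory.ae_imp_of_ae_map_fst_restrict {α β : Type*} [MeasurableSpace α]
    [MeasurableSpace β] {γ : Measure (α × β)} {B : Set β} (hB : MeasurableSet B) {Q : α → Prop}
    (h : ∀ᵐ x ∂(γ.restrict (univ ×ˢ B)).map Prod.fst, Q x) : ∀ᵐ p ∂γ, p.2 ∈ B → Q p.1 := by
  have := ae_of_ae_map measurable_fst.aemeasurable h
  rw [ae_restrict_iff' (MeasurableSet.univ.prod hB)] at this
  filter_upwards [this] with p hp hpB using hp ⟨trivial, hpB⟩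

section PseudoMetric

variable {X : Type*} [PseudoMetricSpace X]

theorem exists_rat_ball_closedBall_subset {D : Set X} (hD : Dense D) (y : X) {r : ℝ} (hr : 0 < r) :
    ∃ y' ∈ D, ∃ q : ℚ, 0 < q ∧ y ∈ ball y' q ∧ closedBall y' q ⊆ ball y r := by
  obtain ⟨y', hy'D, hyy'⟩ := hD.exists_dist_lt y (show 0 < r / 4 by positivity)
  obtain ⟨q, hq₁, hq₂⟩ := exists_rat_btwn (show r / 4 < r / 2 by linarith)
  refine ⟨y', hy'D, q, by exact_mod_cast (show (0 : ℝ) < r / 4 by positivity).trans hq₁,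
    by rw [mem_ball]; linarith, fun z hz => ?_⟩
  rw [mem_closedBall] at hz
  rw [mem_ball]
  linarith [dist_triangle z y' y, dist_comm y y']

variable [MeasurableSpace X]

theorem MeasureTheory.Measure.eventually_measure_ball_lt_top (μ : Measure X)
    [IsLocallyFiniteMeasure μ] (x : X) : ∀ᶠ r in 𝓝[>] 0, μ (ball x r) < ⊤ := by
  obtain ⟨ε, hε, hμ⟩ := (μ.finiteAt_nhds x).exists_mem_basis nhds_basis_ball
  filter_upwards [Ioo_mem_nhdsGT hε] with r hr
  exact (measure_mono (ball_subset_ball hr.2.le)).trans_lt hμ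

theorem MeasureTheory.tendsto_measure_ball_div_of_closedBall {m μ : Measure X} {x : X}
    {L : ℝ≥0∞} (hm : ∀ᶠ r in 𝓝[>] 0, m (ball x r) ≠ ⊤) (hx : x ∈ μ.support)
    (h : Tendsto (fun r => m (closedBall x r) / μ (closedBall x r)) (𝓝[>] 0) (𝓝 L)) :
    Tendsto (fun r => m (ball x r) / μ (ball x r)) (𝓝[>] 0) (𝓝 L) := by
  refine (closed_nhds_basis L).tendsto_right_iff.2 fun s ⟨hLs, hs⟩ => ?_
  obtain ⟨r₀, hr₀, hsub⟩ := mem_nhdsGT_iff_exists_Ioo_subset.1 (h hLs)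
  filter_upwards [hm, Ioo_mem_nhdsGT hr₀] with r hmr ⟨hr, hrr₀⟩
  obtain ⟨u, hu_mono, hu_mem, hu_lim⟩ := exists_seq_strictMono_tendsto' hr
  have hU : ⋃ n, closedBall x (u n) = ball x r := by
    ext z
    simp only [mem_iUnion, mem_closedBall, mem_ball]
    refine ⟨fun ⟨n, hn⟩ => hn.trans_lt (hu_mem n).2, fun hz => ?_⟩
    exact (hu_lim.eventually (eventually_gt_nhds hz)).exists.imp fun n hn => hn.le
  have hmono : Monotone fun n => closedBall x (u n) := fun a b hab =>
    closedBall_subset_closedBall (hu_mono.monotone hab)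
  have hm_lim := tendsto_measure_iUnion_atTop (μ := m) hmono
  have hμ_lim := tendsto_measure_iUnion_atTop (μ := μ) hmono
  rw [hU] at hm_lim hμ_lim
  have hpos : μ (ball x r) ≠ 0 := (nhds_basis_ball.mem_measureSupport.1 hx r hr).ne'
  exact hs.mem_of_tendsto (ENNReal.Tendsto.div hm_lim (Or.inr hpos) hμ_lim (Or.inr hmr))
    (Eventually.of_forall fun n => hsub ⟨(hu_mem n).1, (hu_mem n).2.trans hrr₀⟩)

end PseudoMetric

section Doubling

variable {X : Type*} [MetricSpace X] [SecondCountableTopology X] [MeasurableSpace X]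
  [BorelSpace X] (μ : Measure X) [IsLocallyFiniteMeasure μ] [IsUnifLocDoublingMeasure μ]

theorem IsUnifLocDoublingMeasure.tendsto_closedBall_filterAt_self (x : X) :
    Tendsto (closedBall x) (𝓝[>] 0) ((IsUnifLocDoublingMeasure.vitaliFamily μ 1).filterAt x) :=
  IsUnifLocDoublingMeasure.tendsto_closedBall_filterAt μ (fun _ => x) id tendsto_id
    (eventually_mem_nhdsWithin.mono fun r (hr : 0 < r) => by simpa using hr.le)

theorem ae_upperDensity_eq_rnDeriv (m : Measure X) [IsFiniteMeasure m] :
    ∀ᵐ x ∂μ, upperDensity μ m x = m.rnDeriv μ x := by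
  filter_upwards [(IsUnifLocDoublingMeasure.vitaliFamily μ 1).ae_tendsto_rnDeriv m,
    Measure.support_mem_ae] with x hx hsupp
  exact (tendsto_measure_ball_div_of_closedBall (.of_forall fun _ => measure_ne_top _ _) hsupp
    (hx.comp (IsUnifLocDoublingMeasure.tendsto_closedBall_filterAt_self μ x))).limsup_eq

theorem ae_isLebesguePoint_upperDensity (m : Measure X) [IsFiniteMeasure m] :
    ∀ᵐ x ∂μ, IsLebesguePoint μ (upperDensity μ m) x := by
  set g : X → ℝ := fun z => (m.rnDeriv μ z).toReal
  have hg : Integrable g μ := integrable_toReal_of_lintegral_ne_top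
    (Measure.measurable_rnDeriv m μ).aemeasurable (Measure.lintegral_rnDeriv_lt_top m μ).ne
  have hρ : ∀ᵐ z ∂μ, upperDensity μ m z = ENNReal.ofReal (g z) := by
    filter_upwards [ae_upperDensity_eq_rnDeriv μ m, Measure.rnDeriv_lt_top m μ] with z hz hlt
    rw [hz, ENNReal.ofReal_toReal hlt.ne]
  filter_upwards [hρ, Measure.support_mem_ae,
    (IsUnifLocDoublingMeasure.vitaliFamily μ 1).ae_tendsto_lintegral_enorm_sub_div
      hg.locallyIntegrable] with x hx hsupp hleb
  -- `ν` turns the Lebesgue averages of `g` at `x` into measure ratios.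
  set ν := μ.withDensity fun z => ‖g z - g x‖ₑ
  have hν : ∀ s, MeasurableSet s → ν s = ∫⁻ z in s, ‖g z - g x‖ₑ ∂μ := fun s hs =>
    withDensity_apply _ hs
  have hν_fin : ∀ᶠ r in 𝓝[>] 0, ν (ball x r) ≠ ⊤ := by
    filter_upwards [μ.eventually_measure_ball_lt_top x] with r hr
    rw [hν _ measurableSet_ball]
    exact ((hg.integrableOn.sub (integrableOn_const hr.ne)).2).ne
  have hν_closed : Tendsto (fun r => ν (closedBall x r) / μ (closedBall x r)) (𝓝[>] 0) (𝓝 0) := by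
    simp only [hν _ measurableSet_closedBall]
    exact hleb.comp (IsUnifLocDoublingMeasure.tendsto_closedBall_filterAt_self μ x)
  refine (tendsto_measure_ball_div_of_closedBall hν_fin hsupp hν_closed).congr fun r => ?_
  rw [hν _ measurableSet_ball]
  congr 1
  refine lintegral_congr_ae (ae_restrict_of_ae ?_)
  filter_upwards [hρ] with z hz
  rw [hz, hx, ENNReal.ofReal_sub_add_ofReal_sub ENNReal.toReal_nonneg ENNReal.toReal_nonneg]

def IsLebesgueDensityPoint (m : Measure X) (x : X) : Prop :=
  IsLebesguePoint μ (upperDensity μ m) x ∧ upperDensity μ m x < ⊤ ∧ 0 < upperDensity μ m x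

theorem ae_isLebesgueDensityPoint {m : Measure X} [IsFiniteMeasure m] (hm : m ≪ μ) :
    ∀ᵐ x ∂m, IsLebesgueDensityPoint μ m x := by
  filter_upwards [hm.ae_le (ae_isLebesguePoint_upperDensity μ m),
    hm.ae_le (ae_upperDensity_eq_rnDeriv μ m), hm.ae_le (Measure.rnDeriv_lt_top m μ),
    Measure.rnDeriv_pos hm] with x hleb hρ hlt hpos
  exact ⟨hleb, hρ ▸ hlt, hρ ▸ hpos⟩

end Doubling

theorem stmt_13 {X : Type*} [MetricSpace X] [TopologicalSpace.SeparableSpace X]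
    [MeasurableSpace X] [BorelSpace X]
    (μ : Measure X) [IsLocallyFiniteMeasure μ] [IsUnifLocDoublingMeasure μ]
    (γ : Measure (X × X)) [IsProbabilityMeasure γ]
    (habs : γ.map Prod.fst ≪ μ) :
    ∃ Γ : Set (X × X), MeasurableSet Γ ∧ γ Γ = 1 ∧
      ∀ p ∈ Γ, ∀ r > (0 : ℝ), ∃ (y' : X) (r' : ℝ), 0 < r' ∧
        p.2 ∈ Metric.ball y' r' ∧
        closure (Metric.ball y' r') ⊆ Metric.ball p.2 r ∧
        IsLebesguePoint μ (upperDensity μ (γ.map Prod.fst)) p.1 ∧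
        upperDensity μ (γ.map Prod.fst) p.1 < ⊤ ∧
        IsLebesguePoint μ
          (upperDensity μ
            ((γ.restrict (Set.univ ×ˢ Metric.ball y' r')).map Prod.fst)) p.1 ∧
        0 < upperDensity μ
            ((γ.restrict (Set.univ ×ˢ Metric.ball y' r')).map Prod.fst) p.1 := by
  have := UniformSpace.secondCountable_of_separable X
  obtain ⟨D, hD_count, hD⟩ := TopologicalSpace.exists_countable_dense X
  have := hD_count.to_subtype
  let m : D × ℚ → Measure X := fun i =>
    (γ.restrict (univ ×ˢ ball (i.1 : X) i.2)).map Prod.fst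
  have hm_le : ∀ i, m i ≤ γ.map Prod.fst := fun i =>
    Measure.map_mono Measure.restrict_le_self measurable_fst
  have hgood : ∀ᵐ p ∂γ, IsLebesgueDensityPoint μ (γ.map Prod.fst) p.1 ∧
      ∀ i : D × ℚ, p.2 ∈ ball (i.1 : X) i.2 → IsLebesgueDensityPoint μ (m i) p.1 := by
    refine (ae_of_ae_map measurable_fst.aemeasurable (ae_isLebesgueDensityPoint μ habs)).and
      (ae_all_iff.2 fun i => ae_imp_of_ae_map_fst_restrict measurableSet_ball ?_)
    have := isFiniteMeasure_of_le _ (hm_le i)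
    exact ae_isLebesgueDensityPoint μ ((hm_le i).absolutelyContinuous.trans habs)
  obtain ⟨Γ, hΓ, hγΓ, hΓ_good⟩ := exists_measurableSet_measure_eq_one_of_ae hgood
  refine ⟨Γ, hΓ, hγΓ, fun p hp r hr => ?_⟩
  obtain ⟨⟨hleb, hlt, -⟩, hball⟩ := hΓ_good p hp
  obtain ⟨y', hy'D, q, hq, hy, hsub⟩ := exists_rat_ball_closedBall_subset hD p.2 hr
  obtain ⟨hleb', -, hpos'⟩ := hball (⟨y', hy'D⟩, q) hy
  exact ⟨y', q, Rat.cast_pos.2 hq, hy, closure_ball_subset_closedBall.trans hsub,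
    hleb, hlt, hleb', hpos'⟩
end

section
/- Let X be a separable, locally compact metric space in which every open set is σ-compact. Let (γ_k) be a sequence of Borel probability measures on X × X converging weakly to a Borel probability measure γ, and assume the first marginals agree: π₁♯γ_k = π₁♯γ for every k. Then for every Borel set G ⊆ X, the restrictions γ_k⌊(G × X) converge weakly to γ⌊(G × X) as finite measures, i.e., ∫ φ d(γ_k⌊(G × X)) → ∫ φ d(γ⌊(G × X)) for every bounded continuous φ : X × X → ℝ. -/
/-!
Since all the measures share the first marginal `μ`, replacing the indicator of `G` in the first
coordinate by a bounded continuous `g` with `∫ |𝟙_G - g| dμ` small changes `∫ φ` over `G × X` by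
at most `‖φ‖ ∫ |𝟙_G - g| dμ`, uniformly in the measure. The integrals of the bounded continuous
function `(x, y) ↦ g x * φ (x, y)` converge by weak convergence, and `g` may be taken as close
to `𝟙_G` as we like because a finite measure on a metric space is weakly regular, so bounded
continuous functions are dense in `L¹(μ)`.
-/

open MeasureTheory Filter

open scoped BoundedContinuousFunction

theorem tendsto_of_forall_dist_le_of_tendsto {ι α : Type*} [PseudoMetricSpace α] {l : Filter ι}
    {a : ι → α} {a₀ : α}
    (h : ∀ ε > 0, ∃ b : ι → α, ∃ b₀ : α,
      Tendsto b l (nhds b₀) ∧ (∀ i, dist (a i) (b i) ≤ ε) ∧ dist a₀ b₀ ≤ ε) :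
    Tendsto a l (nhds a₀) := by
  rw [Metric.tendsto_nhds]
  intro ε hε
  obtain ⟨b, b₀, hb, hab, hab₀⟩ := h (ε / 4) (by positivity)
  filter_upwards [Metric.tendsto_nhds.mp hb (ε / 4) (by positivity)] with i hi
  calc dist (a i) a₀ ≤ dist (a i) (b i) + dist (b i) b₀ + dist b₀ a₀ := dist_triangle4 _ _ _ _
    _ < ε := by rw [dist_comm b₀]; linarith [hab i]

section Marginal

variable {X Y : Type*} [TopologicalSpace X] [TopologicalSpace Y]
  [MeasurableSpace X] [MeasurableSpace Y] [OpensMeasurableSpace (X × Y)]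

theorem abs_integral_fst_mul_sub_integral_fst_mul_le {ν : Measure (X × Y)} (φ : X × Y →ᵇ ℝ)
    {f g : X → ℝ} (hf : Integrable f (ν.map Prod.fst)) (hg : Integrable g (ν.map Prod.fst)) :
    |∫ p, f p.1 * φ p ∂ν - ∫ p, g p.1 * φ p ∂ν|
      ≤ ‖φ‖ * ∫ x, |f x - g x| ∂(ν.map Prod.fst) := by
  have hφ : ∀ p, ‖φ p‖ ≤ ‖φ‖ := φ.norm_coe_le_norm
  have hfg : Integrable (fun p : X × Y => f p.1 - g p.1) ν :=
    (hf.sub hg).comp_measurable measurable_fst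
  have hmul : ∀ {h : X → ℝ}, Integrable h (ν.map Prod.fst) →
      Integrable (fun p : X × Y => h p.1 * φ p) ν := fun hh =>
    (hh.comp_measurable measurable_fst).mul_bdd φ.continuous.aestronglyMeasurable
      (.of_forall hφ)
  rw [← integral_sub (hmul hf) (hmul hg), integral_map (f := fun x : X => |f x - g x|)
    measurable_fst.aemeasurable (hf.sub hg).abs.aestronglyMeasurable, ← integral_const_mul,
    ← Real.norm_eq_abs]
  refine norm_integral_le_of_norm_le (hfg.abs.const_mul _) (.of_forall fun p => ?_)
  rw [← sub_mul, norm_mul, Real.norm_eq_abs, mul_comm]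
  exact mul_le_mul_of_nonneg_right (hφ p) (abs_nonneg _)

variable [NormalSpace X] [BorelSpace X]

theorem exists_forall_abs_setIntegral_prod_univ_sub_integral_le (μ : Measure X)
    [IsFiniteMeasure μ] [μ.WeaklyRegular] {G : Set X} (hG : MeasurableSet G) (φ : X × Y →ᵇ ℝ)
    {ε : ℝ} (hε : 0 < ε) :
    ∃ ψ : X × Y →ᵇ ℝ, ∀ ν : Measure (X × Y), ν.map Prod.fst = μ →
      |∫ p in G ×ˢ Set.univ, φ p ∂ν - ∫ p, ψ p ∂ν| ≤ ε := by
  have h1G : Integrable (G.indicator 1) μ := (integrable_const (1 : ℝ)).indicator hG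
  obtain ⟨g, hgG, hg⟩ :=
    h1G.exists_boundedContinuous_integral_sub_le (ε := ε / (‖φ‖ + 1)) (by positivity)
  refine ⟨g.compContinuous ⟨Prod.fst, continuous_fst⟩ * φ, fun ν hν => ?_⟩
  subst hν
  have hrestrict : ∫ p in G ×ˢ Set.univ, φ p ∂ν = ∫ p, G.indicator 1 p.1 * φ p ∂ν := by
    rw [← integral_indicator (hG.prod .univ)]
    congr 1 with p
    by_cases hp : p.1 ∈ G <;> simp [Set.indicator, hp]
  calc _ = |∫ p, G.indicator 1 p.1 * φ p ∂ν - ∫ p, g p.1 * φ p ∂ν| := by rw [hrestrict]; rfl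
    _ ≤ ‖φ‖ * ∫ x, |G.indicator 1 x - g x| ∂(ν.map Prod.fst) :=
      abs_integral_fst_mul_sub_integral_fst_mul_le φ h1G hg
    _ ≤ ‖φ‖ * (ε / (‖φ‖ + 1)) := mul_le_mul_of_nonneg_left hgG (norm_nonneg φ)
    _ ≤ ε := by
      rw [mul_div_assoc', div_le_iff₀ (by positivity)]
      nlinarith [norm_nonneg φ]

end Marginal

theorem stmt_17_general {X : Type*} [MetricSpace X] [TopologicalSpace.SeparableSpace X]
    [MeasurableSpace X] [BorelSpace X]
    (γ : ℕ → Measure (X × X)) (γlim : Measure (X × X))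
    [IsProbabilityMeasure γlim]
    (hconv : ∀ f : BoundedContinuousFunction (X × X) ℝ,
      Tendsto (fun k => ∫ p, f p ∂(γ k)) atTop (nhds (∫ p, f p ∂γlim)))
    (hmarg : ∀ k, (γ k).map Prod.fst = γlim.map Prod.fst) :
    ∀ G : Set X, MeasurableSet G →
      ∀ φ : BoundedContinuousFunction (X × X) ℝ,
        Tendsto (fun k => ∫ p, φ p ∂((γ k).restrict (G ×ˢ Set.univ)))
          atTop (nhds (∫ p, φ p ∂(γlim.restrict (G ×ˢ Set.univ)))) := by
  intro G hG φ
  refine tendsto_of_forall_dist_le_of_tendsto fun ε hε => ?_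
  obtain ⟨ψ, hψ⟩ :=
    exists_forall_abs_setIntegral_prod_univ_sub_integral_le (γlim.map Prod.fst) hG φ hε
  exact ⟨_, _, hconv ψ, fun k => hψ (γ k) (hmarg k), hψ γlim rfl⟩

theorem stmt_17 {X : Type*} [MetricSpace X] [TopologicalSpace.SeparableSpace X]
    [LocallyCompactSpace X] [MeasurableSpace X] [BorelSpace X]
    (hσc : ∀ U : Set X, IsOpen U → IsSigmaCompact U)
    (γ : ℕ → Measure (X × X)) (γlim : Measure (X × X))
    (hprob : ∀ k, IsProbabilityMeasure (γ k)) [IsProbabilityMeasure γlim]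
    (hconv : ∀ f : BoundedContinuousFunction (X × X) ℝ,
      Tendsto (fun k => ∫ p, f p ∂(γ k)) atTop (nhds (∫ p, f p ∂γlim)))
    (hmarg : ∀ k, (γ k).map Prod.fst = γlim.map Prod.fst) :
    ∀ G : Set X, MeasurableSet G →
      ∀ φ : BoundedContinuousFunction (X × X) ℝ,
        Tendsto (fun k => ∫ p, φ p ∂((γ k).restrict (G ×ˢ Set.univ)))
          atTop (nhds (∫ p, φ p ∂(γlim.restrict (G ×ˢ Set.univ)))) :=
  stmt_17_general γ γlim hconv hmarg
end
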